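/- arXiv:1807.05819 — 3 statements merged into one kernel-verified Lean document; each statement's English description precedes it below -/
import Mathlib

section
/- Fix $\sigma > 0$ and let $\mu$ be the Cauchy distribution on $\mathbb{R}$ with location $0$ and scale $\sigma$, i.e., the probability measure with density $x \mapsto \left(\pi\sigma(1 + x^2/\sigma^2)\right)^{-1}$ with respect to Lebesgue measure. Then the pushforward of $\mu$ under the map $\beta \mapsto \beta/\sqrt{\beta^2 + \sigma^2}$ is the probability measure on $(-1,1)$ with density $\rho \mapsto \frac{1}{\pi\sqrt{1-\rho^2}}$ with respect to Lebesgue measure; equivalently, it is the $\mathrm{beta}(1/2,1/2)$ distribution linearly rescaled from $(0,1)$ to the interval $(-1,1)$. -/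
/-!
The map `β ↦ β / √(β² + σ²)` is a strictly increasing bijection of `ℝ` onto `(-1, 1)`, with
inverse `ρ ↦ σ ρ / √(1 - ρ²)`. Since `1 - ρ² = σ² / (β² + σ²)` and `dρ/dβ = σ² / (β² + σ²)^{3/2}`,
the one-dimensional change of variables turns the arcsine density `1 / (π √(1 - ρ²))` into
exactly the Cauchy density `σ / (π (β² + σ²))`.
-/

open Real MeasureTheory Set Function
open scoped ENNReal

theorem map_withDensity_eq_withDensity_indicator_range {f f' : ℝ → ℝ} {p q : ℝ → ℝ≥0∞}
    (hf : ∀ x, HasDerivAt f (f' x) x) (hinj : Injective f)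
    (hpq : ∀ x, ENNReal.ofReal |f' x| * q (f x) = p x) :
    (volume.withDensity p).map f = volume.withDensity ((range f).indicator q) := by
  have hcont : Continuous f := continuous_iff_continuousAt.2 fun x => (hf x).continuousAt
  have hmeas : Measurable f := hcont.measurable
  have hrange : MeasurableSet (range f) := measurableSet_range_of_continuous_injective hcont hinj
  ext A hA
  rw [Measure.map_apply hmeas hA, withDensity_apply _ (hmeas hA), withDensity_apply _ hA,
    lintegral_indicator hrange, Measure.restrict_restrict hrange,
    ← image_preimage_eq_range_inter,
    lintegral_image_eq_lintegral_abs_deriv_mul (hmeas hA) (fun x _ => (hf x).hasDerivWithinAt)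
      hinj.injOn]
  simp_rw [hpq]

noncomputable def corrOfSlope (σ β : ℝ) : ℝ := β / √(β ^ 2 + σ ^ 2)

section corrOfSlope

variable {σ : ℝ}

theorem one_sub_corrOfSlope_sq (hσ : σ ≠ 0) (x : ℝ) :
    1 - corrOfSlope σ x ^ 2 = σ ^ 2 / (x ^ 2 + σ ^ 2) := by
  have hpos : 0 < x ^ 2 + σ ^ 2 := by positivity
  rw [corrOfSlope, div_pow, sq_sqrt hpos.le]
  field_simp
  ring

theorem hasDerivAt_corrOfSlope (hσ : σ ≠ 0) (x : ℝ) :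
    HasDerivAt (corrOfSlope σ) (σ ^ 2 / ((x ^ 2 + σ ^ 2) * √(x ^ 2 + σ ^ 2))) x := by
  have hpos : 0 < x ^ 2 + σ ^ 2 := by positivity
  have hsqrt : HasDerivAt (fun β => √(β ^ 2 + σ ^ 2))
      (1 / (2 * √(x ^ 2 + σ ^ 2)) * (2 * x)) x :=
    (hasDerivAt_sqrt hpos.ne').comp x (by simpa using (hasDerivAt_pow 2 x).add_const (σ ^ 2))
  refine ((hasDerivAt_id' x).fun_div hsqrt (by positivity)).congr_deriv ?_
  have hsq : √(x ^ 2 + σ ^ 2) ^ 2 = x ^ 2 + σ ^ 2 := sq_sqrt hpos.le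
  field_simp
  linear_combination x ^ 2 * hsq

theorem strictMono_corrOfSlope (hσ : σ ≠ 0) : StrictMono (corrOfSlope σ) :=
  strictMono_of_hasDerivAt_pos (hasDerivAt_corrOfSlope hσ) fun x => by
    have hpos : 0 < x ^ 2 + σ ^ 2 := by positivity
    positivity

theorem range_corrOfSlope (hσ : σ ≠ 0) : range (corrOfSlope σ) = Ioo (-1) 1 := by
  ext ρ
  constructor
  · rintro ⟨x, rfl⟩
    have h : 0 < 1 - corrOfSlope σ x ^ 2 := by
      rw [one_sub_corrOfSlope_sq hσ]
      positivity
    exact abs_lt.1 (sq_lt_one_iff_abs_lt_one _ |>.1 (by linarith))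
  · rintro ⟨h₁, h₂⟩
    have hρ : 0 < 1 - ρ ^ 2 := by nlinarith
    have hu : √(1 - ρ ^ 2) ^ 2 = 1 - ρ ^ 2 := sq_sqrt hρ.le
    have hu₀ : 0 < √(1 - ρ ^ 2) := sqrt_pos.2 hρ
    refine ⟨|σ| * ρ / √(1 - ρ ^ 2), ?_⟩
    have hx : (|σ| * ρ / √(1 - ρ ^ 2)) ^ 2 + σ ^ 2 = (|σ| / √(1 - ρ ^ 2)) ^ 2 := by
      field_simp
      rw [sq_abs]
      linear_combination σ ^ 2 * hu
    rw [corrOfSlope, hx, sqrt_sq (by positivity)]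
    field_simp [abs_pos.2 hσ]

theorem abs_deriv_corrOfSlope_mul_arcsine_density (hσ : 0 < σ) (x : ℝ) :
    |σ ^ 2 / ((x ^ 2 + σ ^ 2) * √(x ^ 2 + σ ^ 2))| *
        (1 / (π * √(1 - corrOfSlope σ x ^ 2))) =
      1 / (π * σ * (1 + x ^ 2 / σ ^ 2)) := by
  have hpos : 0 < x ^ 2 + σ ^ 2 := by positivity
  have hsq : √(x ^ 2 + σ ^ 2) ^ 2 = x ^ 2 + σ ^ 2 := sq_sqrt hpos.le
  have hsqrt : √(1 - corrOfSlope σ x ^ 2) = σ / √(x ^ 2 + σ ^ 2) := by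
    rw [one_sub_corrOfSlope_sq hσ.ne', ← hsq, ← div_pow, hsq, sqrt_sq (by positivity)]
  rw [hsqrt, abs_of_pos (by positivity)]
  have := pi_pos
  field_simp
  ring

end corrOfSlope

/-- The pushforward of the Cauchy distribution with location 0 and scale `σ` under
the map `β ↦ β / √(β² + σ²)` is the distribution on `(-1,1)` with density
`ρ ↦ 1/(π √(1-ρ²))`, i.e. the beta(1/2,1/2) distribution rescaled to `(-1,1)`
(Appendix A of Mulder & Gelissen, 2018). -/
theorem cauchy_pushforward_is_beta_half_half
    (σ : ℝ) (hσ : 0 < σ) (μ : Measure ℝ)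
    (hμ : μ = volume.withDensity fun x : ℝ =>
      ENNReal.ofReal (1 / (π * σ * (1 + x ^ 2 / σ ^ 2)))) :
    Measure.map (fun β : ℝ => β / Real.sqrt (β ^ 2 + σ ^ 2)) μ =
      volume.withDensity fun ρ : ℝ =>
        ENNReal.ofReal
          (Set.indicator (Set.Ioo (-1 : ℝ) 1) (fun ρ' => 1 / (π * Real.sqrt (1 - ρ' ^ 2))) ρ) := by
  subst hμ
  change Measure.map (corrOfSlope σ) _ = _
  rw [map_withDensity_eq_withDensity_indicator_range (hasDerivAt_corrOfSlope hσ.ne')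
      (strictMono_corrOfSlope hσ.ne').injective
      (q := fun ρ => ENNReal.ofReal (1 / (π * √(1 - ρ ^ 2)))) fun x => by
        rw [← ENNReal.ofReal_mul (abs_nonneg _), abs_deriv_corrOfSlope_mul_arcsine_density hσ],
    range_corrOfSlope hσ.ne']
  exact congrArg _ (indicator_comp_of_zero ENNReal.ofReal_zero)
end

section
/- Fix $\sigma > 0$ and let $\nu$ be the uniform distribution on the interval $(-1,1)$ (density $1/2$ with respect to Lebesgue measure). Then the pushforward of $\nu$ under the map $\rho \mapsto \rho(1-\rho^2)^{-1/2}\sigma$ is the probability measure on $\mathbb{R}$ with density $\beta \mapsto \frac{1}{2\sigma}\left(1 + \beta^2/\sigma^2\right)^{-3/2}$; equivalently, it is the Student-$t$ distribution with location $0$, squared scale $\sigma^2/2$, and $2$ degrees of freedom. -/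
/-!
The map `ρ ↦ ρ σ / √(1 - ρ²)` is a bijection of `(-1, 1)` onto `ℝ` whose inverse
`β ↦ β / √(σ² + β²)` has derivative `σ² (σ² + β²)^(-3/2)`. By the one-dimensional change of
variables formula, the pushforward of the uniform density `1/2` on `(-1, 1)` therefore has density
`σ² (σ² + β²)^(-3/2) / 2 = (2σ)⁻¹ (1 + β²/σ²)^(-3/2)`.
-/

open Real MeasureTheory Set

theorem rpow_neg_half_eq_inv_sqrt {x : ℝ} (hx : 0 ≤ x) : x ^ (-(1 : ℝ) / 2) = (√x)⁻¹ := by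
  rw [sqrt_eq_rpow, ← rpow_neg hx, neg_div]

theorem map_withDensity_indicator_eq_withDensity_abs_deriv_mul {g h h' : ℝ → ℝ} {t : Set ℝ}
    (f : ℝ → ENNReal) (hg : Measurable g) (ht : MeasurableSet t) (hgh : Function.LeftInverse g h)
    (hrange : range h = t) (hh : ∀ x, HasDerivAt h (h' x) x) :
    (volume.withDensity (t.indicator f)).map g =
      volume.withDensity fun x => ENNReal.ofReal |h' x| * f (h x) := by
  ext s hs
  have hpreimage : t ∩ g ⁻¹' s = h '' s := by
    ext x
    constructor
    · rintro ⟨hxt, hxs⟩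
      obtain ⟨y, rfl⟩ : x ∈ range h := hrange ▸ hxt
      exact ⟨y, by rwa [← hgh y], rfl⟩
    · rintro ⟨y, hys, rfl⟩
      exact ⟨hrange ▸ mem_range_self y, by rwa [mem_preimage, hgh y]⟩
  rw [Measure.map_apply hg hs, withDensity_apply _ (hg hs), withDensity_apply _ hs,
    setLIntegral_indicator ht, hpreimage,
    lintegral_image_eq_lintegral_abs_deriv_mul hs (fun x _ => (hh x).hasDerivWithinAt)
      hgh.injective.injOn]

noncomputable def correlationOfSlope (σ β : ℝ) : ℝ := β / √(σ ^ 2 + β ^ 2)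

noncomputable def slopeOfCorrelation (σ ρ : ℝ) : ℝ := ρ * (1 - ρ ^ 2) ^ (-(1 : ℝ) / 2) * σ

variable {σ : ℝ}

theorem measurable_slopeOfCorrelation : Measurable (slopeOfCorrelation σ) := by
  unfold slopeOfCorrelation; fun_prop

theorem one_sub_correlationOfSlope_sq (hσ : σ ≠ 0) (β : ℝ) :
    1 - correlationOfSlope σ β ^ 2 = σ ^ 2 / (σ ^ 2 + β ^ 2) := by
  have hpos : 0 < σ ^ 2 + β ^ 2 := by positivity
  rw [correlationOfSlope, div_pow, sq_sqrt hpos.le]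
  field_simp
  ring

theorem correlationOfSlope_mem_Ioo (hσ : σ ≠ 0) (β : ℝ) :
    correlationOfSlope σ β ∈ Ioo (-1) 1 := by
  have h : 0 < 1 - correlationOfSlope σ β ^ 2 := by
    rw [one_sub_correlationOfSlope_sq hσ]; positivity
  rw [mem_Ioo, ← abs_lt, ← sq_lt_one_iff_abs_lt_one]
  linarith

theorem slopeOfCorrelation_correlationOfSlope (hσ : 0 < σ) :
    Function.LeftInverse (slopeOfCorrelation σ) (correlationOfSlope σ) := by
  intro β
  have hpos : 0 < σ ^ 2 + β ^ 2 := by positivity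
  rw [slopeOfCorrelation, one_sub_correlationOfSlope_sq hσ.ne',
    rpow_neg_half_eq_inv_sqrt (by positivity), sqrt_div' _ hpos.le, sqrt_sq hσ.le,
    correlationOfSlope]
  field_simp

theorem correlationOfSlope_slopeOfCorrelation (hσ : 0 < σ) {ρ : ℝ} (hρ : ρ ∈ Ioo (-1) 1) :
    correlationOfSlope σ (slopeOfCorrelation σ ρ) = ρ := by
  have hu : 0 < 1 - ρ ^ 2 := by nlinarith [hρ.1, hρ.2]
  have hsum : σ ^ 2 + slopeOfCorrelation σ ρ ^ 2 = σ ^ 2 / (1 - ρ ^ 2) := by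
    rw [slopeOfCorrelation, rpow_neg_half_eq_inv_sqrt hu.le, mul_pow, mul_pow, inv_pow,
      sq_sqrt hu.le]
    field_simp
    ring
  rw [correlationOfSlope, hsum, sqrt_div' _ hu.le, sqrt_sq hσ.le, slopeOfCorrelation,
    rpow_neg_half_eq_inv_sqrt hu.le]
  field_simp

theorem range_correlationOfSlope (hσ : 0 < σ) : range (correlationOfSlope σ) = Ioo (-1) 1 :=
  Subset.antisymm (range_subset_iff.2 (correlationOfSlope_mem_Ioo hσ.ne'))
    fun _ hρ => ⟨_, correlationOfSlope_slopeOfCorrelation hσ hρ⟩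

theorem hasDerivAt_correlationOfSlope (hσ : σ ≠ 0) (β : ℝ) :
    HasDerivAt (correlationOfSlope σ)
      (σ ^ 2 / ((σ ^ 2 + β ^ 2) * √(σ ^ 2 + β ^ 2))) β := by
  have hpos : 0 < σ ^ 2 + β ^ 2 := by positivity
  have hsqrt : HasDerivAt (fun b => √(σ ^ 2 + b ^ 2)) (2 * β / (2 * √(σ ^ 2 + β ^ 2))) β := by
    refine HasDerivAt.sqrt ?_ hpos.ne'
    simpa using (hasDerivAt_pow 2 β).const_add (σ ^ 2)
  refine ((hasDerivAt_id' β).div hsqrt (sqrt_pos.2 hpos).ne').congr_deriv ?_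
  have hsq := sq_sqrt hpos.le
  field_simp
  linear_combination β ^ 2 * hsq

theorem studentT_density_eq_deriv_correlationOfSlope_div_two (hσ : 0 < σ) (β : ℝ) :
    1 / (2 * σ) * (1 + β ^ 2 / σ ^ 2) ^ (-(3 : ℝ) / 2) =
      σ ^ 2 / ((σ ^ 2 + β ^ 2) * √(σ ^ 2 + β ^ 2)) * (1 / 2) := by
  have hpos : 0 < σ ^ 2 + β ^ 2 := by positivity
  have hsum : 1 + β ^ 2 / σ ^ 2 = (σ ^ 2 + β ^ 2) / σ ^ 2 := by field_simp
  rw [hsum, show -(3 : ℝ) / 2 = -(1 + 1 / 2) by norm_num, rpow_neg (by positivity),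
    rpow_add (by positivity), rpow_one, ← sqrt_eq_rpow, sqrt_div hpos.le, sqrt_sq hσ.le]
  field_simp

/-- The pushforward of the uniform distribution on `(-1,1)` under the map
`ρ ↦ ρ (1-ρ²)^{-1/2} σ` is the Student-t distribution with location 0, squared
scale `σ²/2`, and 2 degrees of freedom, i.e. the distribution on `ℝ` with density
`β ↦ (2σ)⁻¹ (1 + β²/σ²)^{-3/2}` (Appendix A of Mulder & Gelissen, 2018). -/
theorem uniform_pushforward_is_student_t_two_df
    (σ : ℝ) (hσ : 0 < σ) (ν : Measure ℝ)
    (hν : ν = volume.withDensity fun ρ : ℝ =>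
      ENNReal.ofReal (Set.indicator (Set.Ioo (-1 : ℝ) 1) (fun _ => (1 : ℝ) / 2) ρ)) :
    Measure.map (fun ρ : ℝ => ρ * (1 - ρ ^ 2) ^ (-(1 : ℝ) / 2) * σ) ν =
      volume.withDensity fun β : ℝ =>
        ENNReal.ofReal (1 / (2 * σ) * (1 + β ^ 2 / σ ^ 2) ^ (-(3 : ℝ) / 2)) := by
  have huniform : (fun ρ => ENNReal.ofReal ((Ioo (-1 : ℝ) 1).indicator (fun _ => 1 / 2) ρ)) =
      (Ioo (-1) 1).indicator fun _ => ENNReal.ofReal (1 / 2) :=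
    (indicator_comp_of_zero ENNReal.ofReal_zero).symm
  rw [hν, huniform]
  refine (map_withDensity_indicator_eq_withDensity_abs_deriv_mul _
    measurable_slopeOfCorrelation measurableSet_Ioo (slopeOfCorrelation_correlationOfSlope hσ)
    (range_correlationOfSlope hσ) (hasDerivAt_correlationOfSlope hσ.ne')).trans
    (congrArg volume.withDensity (funext fun β => ?_))
  rw [studentT_density_eq_deriv_correlationOfSlope_div_two hσ, ENNReal.ofReal_mul' (by norm_num),
    abs_of_pos (by positivity)]
end

section
/- The set $\mathcal{C}_u = \left\{ (\rho_{21}, \rho_{31}, \rho_{32}) \in \mathbb{R}^3 : \begin{pmatrix} 1 & \rho_{21} & \rho_{31} \\ \rho_{21} & 1 & \rho_{32} \\ \rho_{31} & \rho_{32} & 1 \end{pmatrix} \text{ is positive definite} \right\}$ has three-dimensional Lebesgue measure equal to $\pi^2/2$ (numerically $4.934802\ldots$). -/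
open Real MeasureTheory Set Matrix

/-! Completing the square shows that the matrix is positive definite iff `|x|, |y| < 1` and
`|z - x y| < √(1 - x²) √(1 - y²)`. So the elliptope is the region between two graphs over the
open square `(-1, 1)²`, of height `2 √(1 - x²) √(1 - y²)`, and Fubini gives its volume as
`2 (∫₋₁¹ √(1 - t²) dt)² = 2 (π / 2)² = π² / 2`. -/

section UnitDiagonal

variable (x y z : ℝ)

theorem dotProduct_mulVec_unitDiag_three (v : Fin 3 → ℝ) :
    star v ⬝ᵥ (!![1, x, y; x, 1, z; y, z, 1] *ᵥ v) =
      v 0 ^ 2 + v 1 ^ 2 + v 2 ^ 2 + 2 * x * v 0 * v 1 + 2 * y * v 0 * v 2 + 2 * z * v 1 * v 2 := by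
  simp only [dotProduct, Pi.star_apply, star_trivial, mulVec, of_apply, cons_val',
    cons_val_fin_one, Fin.sum_univ_three, cons_val_zero, cons_val_one, cons_val, one_mul]
  ring

/-- The `LDLᵀ` factorisation; the last coefficient is the determinant. -/
theorem one_sub_sq_mul_quadForm_unitDiag_three (a b c : ℝ) :
    (1 - x ^ 2) * (a ^ 2 + b ^ 2 + c ^ 2 + 2 * x * a * b + 2 * y * a * c + 2 * z * b * c) =
      (1 - x ^ 2) * (a + x * b + y * c) ^ 2 + ((1 - x ^ 2) * b + (z - x * y) * c) ^ 2 +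
        ((1 - x ^ 2) * (1 - y ^ 2) - (z - x * y) ^ 2) * c ^ 2 := by
  ring

theorem posDef_unitDiag_three_iff :
    (!![1, x, y; x, 1, z; y, z, 1] : Matrix (Fin 3) (Fin 3) ℝ).PosDef ↔
      x ^ 2 < 1 ∧ y ^ 2 < 1 ∧ (z - x * y) ^ 2 < (1 - x ^ 2) * (1 - y ^ 2) := by
  rw [posDef_iff_dotProduct_mulVec]
  simp only [dotProduct_mulVec_unitDiag_three]
  constructor
  · rintro ⟨-, hpos⟩
    have hx : x ^ 2 < 1 := by
      have := hpos (x := ![-x, 1, 0]) (by simp)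
      simp only [cons_val_zero, cons_val_one, cons_val_two, Nat.succ_eq_add_one, Nat.reduceAdd,
        tail_cons, head_cons] at this
      nlinarith
    have hy : y ^ 2 < 1 := by
      have := hpos (x := ![-y, 0, 1]) (by simp)
      simp only [cons_val_zero, cons_val_one, cons_val_two, Nat.succ_eq_add_one, Nat.reduceAdd,
        tail_cons, head_cons] at this
      nlinarith
    refine ⟨hx, hy, ?_⟩
    have hc : 0 < 1 - x ^ 2 := by linarith
    -- the vector killing the first two squares of `one_sub_sq_mul_quadForm_unitDiag_three`
    have hQ := hpos (x := ![x * (z - x * y) - y * (1 - x ^ 2), -(z - x * y), 1 - x ^ 2])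
      (by simp [hc.ne'])
    simp only [cons_val_zero, cons_val_one, cons_val_two, Nat.succ_eq_add_one, Nat.reduceAdd,
      tail_cons, head_cons] at hQ
    rw [← mul_pos_iff_of_pos_left hc, one_sub_sq_mul_quadForm_unitDiag_three] at hQ
    have hD : 0 < ((1 - x ^ 2) * (1 - y ^ 2) - (z - x * y) ^ 2) * (1 - x ^ 2) ^ 2 :=
      hQ.trans_eq (by ring)
    exact sub_pos.1 (pos_of_mul_pos_left hD (sq_nonneg _))
  · rintro ⟨hx, hy, hD⟩
    refine ⟨?_, fun v hv => ?_⟩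
    · ext i j
      fin_cases i <;> fin_cases j <;> simp
    have hc : 0 < 1 - x ^ 2 := by linarith
    rw [← mul_pos_iff_of_pos_left hc, one_sub_sq_mul_quadForm_unitDiag_three]
    have hsq₀ := mul_nonneg hc.le (sq_nonneg (v 0 + x * v 1 + y * v 2))
    rcases ne_or_eq (v 2) 0 with h2 | h2
    · exact add_pos_of_nonneg_of_pos (add_nonneg hsq₀ (sq_nonneg _))
        (mul_pos (sub_pos.2 hD) (by positivity))
    rcases ne_or_eq (v 1) 0 with h1 | h1
    · have hb := mul_ne_zero hc.ne' h1
      refine add_pos_of_pos_of_nonneg (add_pos_of_nonneg_of_pos hsq₀ ?_) ?_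
      · simp only [h2, mul_zero, add_zero]
        positivity
      · simp only [h2]
        positivity
    have h0 : v 0 ≠ 0 := fun h0 => hv (by ext i; fin_cases i <;> assumption)
    simp only [h1, h2, mul_zero, add_zero, ne_eq, OfNat.ofNat_ne_zero, not_false_eq_true,
      zero_pow]
    exact mul_pos hc (by positivity)

theorem posDef_unitDiag_three_iff_mem_Ioo :
    (!![1, x, y; x, 1, z; y, z, 1] : Matrix (Fin 3) (Fin 3) ℝ).PosDef ↔
      (x ∈ Ioo (-1) 1 ∧ y ∈ Ioo (-1) 1) ∧
        z ∈ Ioo (x * y - √(1 - x ^ 2) * √(1 - y ^ 2)) (x * y + √(1 - x ^ 2) * √(1 - y ^ 2)) := by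
  simp only [posDef_unitDiag_three_iff, sq_lt_one_iff_abs_lt_one, ← abs_lt, mem_Ioo, and_assoc]
  refine and_congr_right fun hx => and_congr_right fun hy => ?_
  rw [← sqrt_mul (by nlinarith [abs_lt.1 hx]), ← sq_abs, ← lt_sqrt (abs_nonneg _), abs_sub_lt_iff]
  constructor <;> rintro ⟨h₁, h₂⟩ <;> constructor <;> linarith

end UnitDiagonal

theorem measurePreserving_finThree_prod {α : Type*} [MeasurableSpace α] (μ : Measure α)
    [SigmaFinite μ] :
    MeasurePreserving (fun v : Fin 3 → α => ((v 0, v 1), v 2)) (Measure.pi fun _ => μ)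
      ((μ.prod μ).prod μ) := by
  have h := (measurePreserving_prodAssoc μ μ μ).symm.comp
    (((MeasurePreserving.id μ).prod (measurePreserving_finTwoArrow μ)).comp
      (measurePreserving_piFinSuccAbove (fun _ => μ) 0))
  convert h using 1
  ext v <;> simp [MeasurableEquiv.piFinSuccAbove, MeasurableEquiv.finTwoArrow,
    MeasurableEquiv.prodAssoc, Fin.tail]

theorem volume_regionBetween_sub_add {α : Type*} [MeasurableSpace α] {μ : Measure α}
    [SigmaFinite μ] {c w : α → ℝ} {s : Set α} (hc : IntegrableOn c s μ) (hw : IntegrableOn w s μ)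
    (hs : MeasurableSet s) (hw₀ : ∀ p ∈ s, 0 ≤ w p) :
    μ.prod volume (regionBetween (c - w) (c + w) s) = ENNReal.ofReal (2 * ∫ p in s, w p ∂μ) := by
  rw [volume_regionBetween_eq_integral (hc.sub hw) (hc.add hw) hs
    fun p hp => by simp only [Pi.sub_apply, Pi.add_apply]; linarith [hw₀ p hp],
    ← integral_const_mul]
  congr 2 with p
  simp only [Pi.sub_apply, Pi.add_apply]
  ring

theorem setIntegral_Ioo_sqrt_one_sub_sq : ∫ t in Ioo (-1 : ℝ) 1, √(1 - t ^ 2) = π / 2 := by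
  rw [← integral_Ioc_eq_integral_Ioo, ← intervalIntegral.integral_of_le (by norm_num),
    integral_sqrt_one_sub_sq]

theorem setIntegral_square_sqrt_one_sub_sq_mul :
    ∫ p in Ioo (-1 : ℝ) 1 ×ˢ Ioo (-1 : ℝ) 1, √(1 - p.1 ^ 2) * √(1 - p.2 ^ 2) = (π / 2) ^ 2 := by
  rw [Measure.volume_eq_prod, setIntegral_prod_mul (fun t : ℝ => √(1 - t ^ 2))
    (fun t : ℝ => √(1 - t ^ 2)), setIntegral_Ioo_sqrt_one_sub_sq, sq]

theorem Continuous.integrableOn_square {f : ℝ × ℝ → ℝ} (hf : Continuous f) :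
    IntegrableOn f (Ioo (-1 : ℝ) 1 ×ˢ Ioo (-1 : ℝ) 1) :=
  (hf.locallyIntegrable.integrableOn_isCompact (isCompact_Icc.prod isCompact_Icc)).mono_set
    (prod_mono Ioo_subset_Icc_self Ioo_subset_Icc_self)

/-- The volume of the 3-dimensional elliptope, i.e. the set of `(ρ₂₁, ρ₃₁, ρ₃₂)` for
which the `3 × 3` symmetric matrix with unit diagonal is positive definite, equals
`π²/2 ≈ 4.934802` (Joe, 2006; used in Mulder & Gelissen, 2018). -/
theorem volume_elliptope_three :
    volume {ρ : Fin 3 → ℝ |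
        (!![1, ρ 0, ρ 1; ρ 0, 1, ρ 2; ρ 1, ρ 2, 1] : Matrix (Fin 3) (Fin 3) ℝ).PosDef} =
      ENNReal.ofReal (π ^ 2 / 2) := by
  set c : ℝ × ℝ → ℝ := fun p => p.1 * p.2
  set w : ℝ × ℝ → ℝ := fun p => √(1 - p.1 ^ 2) * √(1 - p.2 ^ 2)
  set square := Ioo (-1 : ℝ) 1 ×ˢ Ioo (-1 : ℝ) 1
  have hc : Continuous c := by fun_prop
  have hw : Continuous w := by fun_prop
  have hsquare : MeasurableSet square := measurableSet_Ioo.prod measurableSet_Ioo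
  have hset : {ρ : Fin 3 → ℝ |
      (!![1, ρ 0, ρ 1; ρ 0, 1, ρ 2; ρ 1, ρ 2, 1] : Matrix (Fin 3) (Fin 3) ℝ).PosDef} =
      (fun ρ : Fin 3 → ℝ => ((ρ 0, ρ 1), ρ 2)) ⁻¹' regionBetween (c - w) (c + w) square := by
    ext ρ
    simp [regionBetween, posDef_unitDiag_three_iff_mem_Ioo, square, c, w]
  rw [hset, volume_pi, (measurePreserving_finThree_prod volume).measure_preimage
      (measurableSet_regionBetween (by fun_prop) (by fun_prop) hsquare).nullMeasurableSet,
    ← Measure.volume_eq_prod, volume_regionBetween_sub_add hc.integrableOn_square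
      hw.integrableOn_square hsquare (fun p _ => by positivity),
    setIntegral_square_sqrt_one_sub_sq_mul]
  ring_nf
end
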